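/- arXiv:2306.03106 — 7 statements merged into one kernel-verified Lean document; each statement's English description precedes it below -/
import Mathlib

section
/- Let K be a field and let (E₁, σ₁), (E₂, σ₂) be symplectic vector spaces over K with dim E₁ = dim E₂. Then there exists a linear isomorphism φ : E₁ → E₂ such that σ₂(φ(x), φ(y)) = σ₁(x, y) for all x, y ∈ E₁ (a linear symplectomorphism). -/
/-!
By nondegeneracy there are `x, y ∈ E₁` with `σ₁ x y = 1`. On their span `σ₁` has Gram matrix
`!![0, 1; -1, 0]`, so it is nondegenerate there and `E₁` splits as this plane plus its
`σ₁`-orthogonal complement, on which `σ₁` is again alternating and nondegenerate. Doing the same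
in `E₂`, the two planes are matched by their bases `x, y` and the complements by induction on
the dimension.
-/

open Module Submodule
open LinearMap (BilinForm)

namespace LinearMap.BilinForm

variable {K E F : Type*} [Field K] [AddCommGroup E] [Module K E] [AddCommGroup F] [Module K F]

lemma exists_apply_eq_one_of_separatingLeft [Nontrivial E] {B : BilinForm K E}
    (hB : B.SeparatingLeft) : ∃ x y, B x y = 1 := by
  obtain ⟨x, hx⟩ := exists_ne (0 : E)
  obtain ⟨y, hy⟩ : ∃ y, B x y ≠ 0 := by
    by_contra! h
    exact hx (hB x h)
  exact ⟨x, (B x y)⁻¹ • y, by rw [map_smul, smul_eq_mul, inv_mul_cancel₀ hy]⟩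

lemma apply_basis_equiv_apply_basis_equiv {ι : Type*} {B₁ : BilinForm K E} {B₂ : BilinForm K F}
    (b₁ : Basis ι K E) (b₂ : Basis ι K F) (h : ∀ i j, B₂ (b₂ i) (b₂ j) = B₁ (b₁ i) (b₁ j))
    (u v : E) :
    B₂ (b₁.equiv b₂ (Equiv.refl ι) u) (b₁.equiv b₂ (Equiv.refl ι) v) = B₁ u v := by
  have key : B₂.compl₁₂ (b₁.equiv b₂ (Equiv.refl ι)).toLinearMap
      (b₁.equiv b₂ (Equiv.refl ι)).toLinearMap = B₁ :=
    ext_basis b₁ fun i j => by simpa using h i j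
  exact LinearMap.congr_fun₂ key u v

lemma IsRefl.apply_add_add_of_mem_orthogonal {B : BilinForm K E} (hB : B.IsRefl)
    {W : Submodule K E} {a a' b b' : E} (ha : a ∈ W) (ha' : a' ∈ W)
    (hb : b ∈ B.orthogonal W) (hb' : b' ∈ B.orthogonal W) :
    B (a + b) (a' + b') = B a a' + B b b' := by
  have hab' : B a b' = 0 := hb' a ha
  have hba' : B b a' = 0 := hB _ _ (hb a' ha')
  rw [map_add, map_add, LinearMap.add_apply, LinearMap.add_apply, hab', hba', add_zero,
    zero_add]

lemma IsRefl.exists_isometry_of_isCompl_orthogonal {B₁ : BilinForm K E} {B₂ : BilinForm K F}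
    (hB₁ : B₁.IsRefl) (hB₂ : B₂.IsRefl) {W₁ : Submodule K E} {W₂ : Submodule K F}
    (hW₁ : IsCompl W₁ (B₁.orthogonal W₁)) (hW₂ : IsCompl W₂ (B₂.orthogonal W₂))
    (η : W₁ ≃ₗ[K] W₂) (hη : ∀ u v : W₁, B₂ (η u) (η v) = B₁ u v)
    (ψ : B₁.orthogonal W₁ ≃ₗ[K] B₂.orthogonal W₂) (hψ : ∀ u v, B₂ (ψ u) (ψ v) = B₁ u v) :
    ∃ φ : E ≃ₗ[K] F, ∀ x y, B₂ (φ x) (φ y) = B₁ x y := by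
  set e₁ := prodEquivOfIsCompl _ _ hW₁
  refine ⟨e₁.symm.trans ((η.prodCongr ψ).trans (prodEquivOfIsCompl _ _ hW₂)), fun x y => ?_⟩
  obtain ⟨⟨a, b⟩, rfl⟩ := e₁.surjective x
  obtain ⟨⟨a', b'⟩, rfl⟩ := e₁.surjective y
  simp only [LinearEquiv.trans_apply, LinearEquiv.symm_apply_apply, LinearEquiv.prodCongr_apply]
  simp only [e₁, coe_prodEquivOfIsCompl']
  rw [hB₁.apply_add_add_of_mem_orthogonal a.2 a'.2 b.2 b'.2,
    hB₂.apply_add_add_of_mem_orthogonal (η a).2 (η a').2 (ψ b).2 (ψ b').2, hη, hψ]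

namespace IsAlt

variable {B : BilinForm K E} {x y : E}

lemma apply_swap_eq_neg_one (hB : B.IsAlt) (hxy : B x y = 1) : B y x = -1 := by
  rw [← hB.neg_eq, hxy]

lemma linearIndependent_pair (hB : B.IsAlt) (hxy : B x y = 1) : LinearIndependent K ![x, y] := by
  refine LinearIndependent.pair_iff.mpr fun s t hst => ?_
  have hs : B (s • x + t • y) y = s := by simp [hxy, hB.self_eq_zero]
  have ht : B (s • x + t • y) x = -t := by
    simp [hB.apply_swap_eq_neg_one hxy, hB.self_eq_zero]
  rw [hst, map_zero, LinearMap.zero_apply] at hs ht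
  exact ⟨hs.symm, neg_eq_zero.mp ht.symm⟩

lemma restrict_span_pair_nondegenerate (hB : B.IsAlt) (hxy : B x y = 1) :
    (B.restrict (span K (Set.range ![x, y]))).Nondegenerate := by
  refine (IsRefl.nondegenerate_iff_separatingLeft (B := B.restrict _)
    fun u v => hB.isRefl u v).mpr ?_
  rintro ⟨w, hw⟩ hw₀
  rw [Matrix.range_cons_cons_empty] at hw
  obtain ⟨a, c, rfl⟩ := mem_span_pair.mp hw
  have ha : a = 0 := by
    simpa [hxy, hB.self_eq_zero] using hw₀ ⟨y, subset_span (by simp)⟩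
  have hc : c = 0 := by
    simpa [hB.apply_swap_eq_neg_one hxy, hB.self_eq_zero] using hw₀ ⟨x, subset_span (by simp)⟩
  simp [ha, hc]

lemma exists_isometry_span_pair {B₁ : BilinForm K E} {B₂ : BilinForm K F}
    (hB₁ : B₁.IsAlt) (hB₂ : B₂.IsAlt) {x₁ y₁ : E} {x₂ y₂ : F}
    (hxy₁ : B₁ x₁ y₁ = 1) (hxy₂ : B₂ x₂ y₂ = 1) :
    ∃ η : span K (Set.range ![x₁, y₁]) ≃ₗ[K] span K (Set.range ![x₂, y₂]),
      ∀ u v, B₂ (η u) (η v) = B₁ u v := by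
  refine ⟨_, apply_basis_equiv_apply_basis_equiv (B₁ := B₁.restrict _) (B₂ := B₂.restrict _)
    (.span (hB₁.linearIndependent_pair hxy₁)) (.span (hB₂.linearIndependent_pair hxy₂)) ?_⟩
  intro i j
  fin_cases i <;> fin_cases j <;>
    simp [Basis.span_apply, hxy₁, hxy₂, hB₁.apply_swap_eq_neg_one hxy₁,
      hB₂.apply_swap_eq_neg_one hxy₂, hB₁.self_eq_zero, hB₂.self_eq_zero]

end IsAlt

section FiniteDimensional

variable [FiniteDimensional K E] [FiniteDimensional K F]

lemma restrict_orthogonal_nondegenerate {B : BilinForm K E} (hB : B.Nondegenerate)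
    (hB₀ : B.IsRefl) {W : Submodule K E} (hW : (B.restrict W).Nondegenerate) :
    (B.restrict (B.orthogonal W)).Nondegenerate := by
  rw [restrict_nondegenerate_iff_isCompl_orthogonal hB₀, orthogonal_orthogonal hB hB₀]
  exact (isCompl_orthogonal_of_restrict_nondegenerate hB₀ hW).symm

lemma IsAlt.finrank_orthogonal_span_pair {B : BilinForm K E} (hB : B.IsAlt)
    (hB' : B.Nondegenerate) {x y : E} (hxy : B x y = 1) :
    finrank K (B.orthogonal (span K (Set.range ![x, y]))) = finrank K E - 2 := by
  rw [finrank_orthogonal hB', finrank_span_eq_card (hB.linearIndependent_pair hxy),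
    Fintype.card_fin]

theorem IsAlt.exists_isometry_of_finrank_eq {B₁ : BilinForm K E} {B₂ : BilinForm K F}
    (hB₁ : B₁.IsAlt) (hB₁' : B₁.Nondegenerate) (hB₂ : B₂.IsAlt) (hB₂' : B₂.Nondegenerate)
    (h : finrank K E = finrank K F) :
    ∃ φ : E ≃ₗ[K] F, ∀ x y, B₂ (φ x) (φ y) = B₁ x y := by
  induction hn : finrank K E using Nat.strong_induction_on generalizing E F with
  | _ n ih =>
  rcases Nat.eq_zero_or_pos n with rfl | hpos
  · have : Subsingleton E := finrank_zero_iff.mp hn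
    exact ⟨.ofFinrankEq _ _ h, fun x y => by simp [Subsingleton.elim x 0]⟩
  have : Nontrivial E := finrank_pos_iff.mp (hn ▸ hpos)
  have : Nontrivial F := finrank_pos_iff.mp (h ▸ hn ▸ hpos)
  obtain ⟨x₁, y₁, hxy₁⟩ := exists_apply_eq_one_of_separatingLeft hB₁'.1
  obtain ⟨x₂, y₂, hxy₂⟩ := exists_apply_eq_one_of_separatingLeft hB₂'.1
  obtain ⟨η, hη⟩ := hB₁.exists_isometry_span_pair hB₂ hxy₁ hxy₂
  have hW₁ := hB₁.restrict_span_pair_nondegenerate hxy₁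
  have hW₂ := hB₂.restrict_span_pair_nondegenerate hxy₂
  obtain ⟨ψ, hψ⟩ := ih (n - 2) (by omega)
    (B₁ := B₁.restrict (B₁.orthogonal (span K (Set.range ![x₁, y₁]))))
    (B₂ := B₂.restrict (B₂.orthogonal (span K (Set.range ![x₂, y₂])))) (fun u => hB₁ u)
    (restrict_orthogonal_nondegenerate hB₁' hB₁.isRefl hW₁) (fun u => hB₂ u)
    (restrict_orthogonal_nondegenerate hB₂' hB₂.isRefl hW₂)
    (by rw [hB₁.finrank_orthogonal_span_pair hB₁' hxy₁,
      hB₂.finrank_orthogonal_span_pair hB₂' hxy₂, h])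
    (by rw [hB₁.finrank_orthogonal_span_pair hB₁' hxy₁, hn])
  exact hB₁.isRefl.exists_isometry_of_isCompl_orthogonal hB₂.isRefl
    (isCompl_orthogonal_of_restrict_nondegenerate hB₁.isRefl hW₁)
    (isCompl_orthogonal_of_restrict_nondegenerate hB₂.isRefl hW₂) η hη ψ hψ

end FiniteDimensional

end LinearMap.BilinForm

/-- Two symplectic vector spaces over the same field with the same (finite) dimension
are linearly symplectomorphic. -/
theorem exists_linear_symplectomorphism
    {K : Type*} [Field K]
    {E₁ : Type*} [AddCommGroup E₁] [Module K E₁] [FiniteDimensional K E₁]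
    {E₂ : Type*} [AddCommGroup E₂] [Module K E₂] [FiniteDimensional K E₂]
    (σ₁ : E₁ →ₗ[K] E₁ →ₗ[K] K) (σ₂ : E₂ →ₗ[K] E₂ →ₗ[K] K)
    (halt₁ : ∀ x : E₁, σ₁ x x = 0)
    (hnd₁ : ∀ x : E₁, (∀ y : E₁, σ₁ x y = 0) → x = 0)
    (halt₂ : ∀ x : E₂, σ₂ x x = 0)
    (hnd₂ : ∀ x : E₂, (∀ y : E₂, σ₂ x y = 0) → x = 0)
    (hdim : Module.finrank K E₁ = Module.finrank K E₂) :
    ∃ φ : E₁ ≃ₗ[K] E₂, ∀ x y : E₁, σ₂ (φ x) (φ y) = σ₁ x y :=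
  BilinForm.IsAlt.exists_isometry_of_finrank_eq halt₁
    ((BilinForm.IsAlt.isRefl halt₁).nondegenerate_iff_separatingLeft.mpr hnd₁) halt₂
    ((BilinForm.IsAlt.isRefl halt₂).nondegenerate_iff_separatingLeft.mpr hnd₂) hdim
end

section
/- Let (E, σ) be a finite-dimensional real symplectic vector space. Then there exists a linear endomorphism J of E such that J ∘ J = −id_E, σ(Jx, Jy) = σ(x, y) for all x, y ∈ E, and the bilinear form g(x, y) = σ(x, Jy) is symmetric and positive definite. In particular, E carries a complex vector space structure (with i acting as J) adapted to σ, and a positive definite inner product whose associated structure has σ as compatible form. -/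
/-!
Induction on the dimension. Nondegeneracy gives `e, f` with `σ e f = 1`; on the plane
`P = span {e, f}` the map `e ↦ f, f ↦ -e` is a compatible complex structure, so `σ` is
nondegenerate on `P` and `E = P ⊕ Pᗮ`, where `Pᗮ` is the `σ`-orthogonal of `P`. The form stays
symplectic on `Pᗮ`, which has smaller dimension, and since the two summands are `σ`-orthogonal the
direct sum of the complex structures on `P` and on `Pᗮ` is compatible on `E`.
-/

open Module Submodule
open LinearMap (BilinForm)

namespace LinearMap.BilinForm

variable {E : Type*} [AddCommGroup E] [Module ℝ E]

structure IsCompatibleComplexStructure (σ : BilinForm ℝ E) (J : E →ₗ[ℝ] E) : Prop where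
  apply_apply : ∀ x, J (J x) = -x
  apply_apply_eq : ∀ x y, σ (J x) (J y) = σ x y
  apply_comm : ∀ x y, σ x (J y) = σ y (J x)
  apply_pos : ∀ x, x ≠ 0 → 0 < σ x (J x)

variable {σ : BilinForm ℝ E}

namespace IsCompatibleComplexStructure

variable {J : E →ₗ[ℝ] E}

theorem of_subsingleton [Subsingleton E] : IsCompatibleComplexStructure σ 0 where
  apply_apply x := Subsingleton.elim _ _
  apply_apply_eq x y := by simp [Subsingleton.elim x 0, Subsingleton.elim y 0]
  apply_comm x y := by rw [Subsingleton.elim x 0, Subsingleton.elim y 0]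
  apply_pos x hx := absurd (Subsingleton.elim x 0) hx

theorem apply_nonneg (hJ : IsCompatibleComplexStructure σ J) (x : E) : 0 ≤ σ x (J x) := by
  rcases eq_or_ne x 0 with rfl | hx
  · simp
  · exact (hJ.apply_pos x hx).le

theorem separatingLeft (hJ : IsCompatibleComplexStructure σ J) : σ.SeparatingLeft :=
  fun x hx => by_contra fun hx0 => (hJ.apply_pos x hx0).ne' (hx (J x))

end IsCompatibleComplexStructure

theorem IsAlt.restrict (hσ : σ.IsAlt) (W : Submodule ℝ E) :
    (σ.restrict W).IsAlt :=
  fun x => hσ x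

theorem _root_.LinearMap.SeparatingLeft.exists_apply_eq_one [Nontrivial E]
    (hnd : σ.SeparatingLeft) : ∃ e f, σ e f = 1 := by
  obtain ⟨e, he⟩ := exists_ne (0 : E)
  obtain ⟨f, hf⟩ : ∃ f, σ e f ≠ 0 := by
    by_contra! h
    exact he (hnd e h)
  exact ⟨e, (σ e f)⁻¹ • f, by simp [hf]⟩

theorem separatingLeft_restrict_orthogonal (hσ : σ.IsRefl) (hnd : σ.SeparatingLeft)
    {W : Submodule ℝ E} (hW : IsCompl W (σ.orthogonal W)) :
    (σ.restrict (σ.orthogonal W)).SeparatingLeft := by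
  intro v hv
  refine Subtype.ext (hnd v fun x => ?_)
  obtain ⟨w, hw, u, hu, rfl⟩ := mem_sup.mp (hW.sup_eq_top ▸ mem_top : x ∈ W ⊔ σ.orthogonal W)
  rw [map_add, hσ _ _ (v.2 w hw), zero_add]
  exact hv ⟨u, hu⟩

theorem exists_isCompatibleComplexStructure_restrict_span_pair (hσ : σ.IsAlt) {e f : E}
    (hef : σ e f = 1) : ∃ J, IsCompatibleComplexStructure (σ.restrict (span ℝ {e, f})) J := by
  have hfe : σ f e = -1 := by rw [← LinearMap.IsAlt.neg hσ e f, hef]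
  have hform (s t s' t' : ℝ) :
      σ (s • e + t • f) (s' • e + t' • f) = s * t' - t * s' := by
    simp [hσ e, hσ f, hef, hfe]; ring
  set K : E →ₗ[ℝ] E := (σ.flip f).smulRight f - (σ e).smulRight e
  have hK (s t : ℝ) : K (s • e + t • f) = -t • e + s • f := by
    simp [K, hσ e, hσ f, hef]; abel
  have hKP : ∀ x ∈ span ℝ {e, f}, K x ∈ span ℝ {e, f} := by
    rintro _ hx
    obtain ⟨s, t, rfl⟩ := mem_span_pair.mp hx
    exact hK s t ▸ mem_span_pair.mpr ⟨_, _, rfl⟩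
  refine ⟨K.restrict hKP, ?_⟩
  constructor
  case apply_apply =>
    rintro ⟨_, hx⟩
    obtain ⟨s, t, rfl⟩ := mem_span_pair.mp hx
    ext
    simp only [LinearMap.coe_restrict_apply, hK, Submodule.coe_neg]
    module
  case apply_apply_eq | apply_comm =>
    rintro ⟨_, hx⟩ ⟨_, hy⟩
    obtain ⟨s, t, rfl⟩ := mem_span_pair.mp hx
    obtain ⟨s', t', rfl⟩ := mem_span_pair.mp hy
    simp only [restrict_apply, LinearMap.domRestrict_apply, LinearMap.coe_restrict_apply, hK,
      hform]
    ring
  case apply_pos =>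
    rintro ⟨_, hx⟩ hne
    obtain ⟨s, t, rfl⟩ := mem_span_pair.mp hx
    simp only [restrict_apply, LinearMap.domRestrict_apply, LinearMap.coe_restrict_apply, hK,
      hform]
    have hst : s ≠ 0 ∨ t ≠ 0 := by
      by_contra! h
      exact hne (by simp [h.1, h.2])
    rcases hst with h | h <;> nlinarith [sq_pos_of_ne_zero h, sq_nonneg s, sq_nonneg t]

theorem IsCompatibleComplexStructure.ofIsCompl (hσ : σ.IsRefl) {U V : Submodule ℝ E}
    (hUV : IsCompl U V) (horth : ∀ u ∈ U, ∀ v ∈ V, σ u v = 0)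
    {JU : U →ₗ[ℝ] U} {JV : V →ₗ[ℝ] V}
    (hJU : IsCompatibleComplexStructure (σ.restrict U) JU)
    (hJV : IsCompatibleComplexStructure (σ.restrict V) JV) :
    IsCompatibleComplexStructure σ
      (LinearMap.ofIsCompl hUV (U.subtype ∘ₗ JU) (V.subtype ∘ₗ JV)) := by
  set J := LinearMap.ofIsCompl hUV (U.subtype ∘ₗ JU) (V.subtype ∘ₗ JV)
  have hJ (u : U) (v : V) : J (u + v) = JU u + JV v := by simp [J]
  have hσ (u u' : U) (v v' : V) : σ (u + v) (u' + v') = σ u u' + σ v v' := by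
    simp [horth _ u.2 _ v'.2, hσ _ _ (horth _ u'.2 _ v.2)]
  have hdecomp (x : E) : ∃ (u : U) (v : V), x = u + v := by
    obtain ⟨u, hu, v, hv, rfl⟩ := mem_sup.mp (hUV.sup_eq_top ▸ mem_top : x ∈ U ⊔ V)
    exact ⟨⟨u, hu⟩, ⟨v, hv⟩, rfl⟩
  constructor
  · intro x
    obtain ⟨u, v, rfl⟩ := hdecomp x
    rw [hJ, hJ, hJU.apply_apply, hJV.apply_apply, Submodule.coe_neg, Submodule.coe_neg, neg_add]
  · intro x y
    obtain ⟨u, v, rfl⟩ := hdecomp x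
    obtain ⟨u', v', rfl⟩ := hdecomp y
    rw [hJ, hJ, hσ, hσ]
    exact congrArg₂ (· + ·) (hJU.apply_apply_eq u u') (hJV.apply_apply_eq v v')
  · intro x y
    obtain ⟨u, v, rfl⟩ := hdecomp x
    obtain ⟨u', v', rfl⟩ := hdecomp y
    rw [hJ, hJ, hσ, hσ]
    exact congrArg₂ (· + ·) (hJU.apply_comm u u') (hJV.apply_comm v v')
  · intro x hx
    obtain ⟨u, v, rfl⟩ := hdecomp x
    rw [hJ, hσ]
    by_cases hu : u = 0
    · have hv : v ≠ 0 := by rintro rfl; simp [hu] at hx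
      exact add_pos_of_nonneg_of_pos (hJU.apply_nonneg u) (hJV.apply_pos v hv)
    · exact add_pos_of_pos_of_nonneg (hJU.apply_pos u hu) (hJV.apply_nonneg v)

theorem exists_isCompatibleComplexStructure [FiniteDimensional ℝ E] (hσ : σ.IsAlt)
    (hnd : σ.SeparatingLeft) : ∃ J, IsCompatibleComplexStructure σ J := by
  induction hn : finrank ℝ E using Nat.strong_induction_on generalizing E with
  | _ n ih =>
  rcases subsingleton_or_nontrivial E with hE | hE
  · exact ⟨0, .of_subsingleton⟩
  obtain ⟨e, f, hef⟩ := SeparatingLeft.exists_apply_eq_one hnd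
  set P := span ℝ {e, f}
  obtain ⟨JP, hJP⟩ := exists_isCompatibleComplexStructure_restrict_span_pair hσ hef
  have hP : IsCompl P (σ.orthogonal P) :=
    isCompl_orthogonal_of_restrict_nondegenerate hσ.isRefl
      ((hσ.restrict P).isRefl.nondegenerate_iff_separatingLeft.mpr hJP.separatingLeft)
  have hlt : finrank ℝ (σ.orthogonal P) < n := by
    refine hn ▸ Submodule.finrank_lt fun htop => ?_
    have := (htop ▸ mem_top : f ∈ σ.orthogonal P) e (subset_span (by simp))
    simp [hef] at this
  obtain ⟨JV, hJV⟩ := ih _ hlt (hσ.restrict _)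
    (separatingLeft_restrict_orthogonal hσ.isRefl hnd hP) rfl
  exact ⟨_, .ofIsCompl hσ.isRefl hP (fun u hu v hv => hv u hu) hJP hJV⟩

end LinearMap.BilinForm

/-- On a finite-dimensional real symplectic vector space `(E, σ)` there exists a
compatible complex structure: a linear endomorphism `J` with `J ∘ J = -id`,
preserving `σ`, and such that `g(x, y) = σ(x, J y)` is symmetric positive definite. -/
theorem exists_compatible_complex_structure
    {E : Type*} [AddCommGroup E] [Module ℝ E] [FiniteDimensional ℝ E]
    (σ : E →ₗ[ℝ] E →ₗ[ℝ] ℝ)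
    (halt : ∀ x : E, σ x x = 0)
    (hnd : ∀ x : E, (∀ y : E, σ x y = 0) → x = 0) :
    ∃ J : E →ₗ[ℝ] E,
      (∀ x : E, J (J x) = -x) ∧
      (∀ x y : E, σ (J x) (J y) = σ x y) ∧
      (∀ x y : E, σ x (J y) = σ y (J x)) ∧
      (∀ x : E, x ≠ 0 → 0 < σ x (J x)) := by
  obtain ⟨J, hJ⟩ := LinearMap.BilinForm.exists_isCompatibleComplexStructure (σ := σ) halt hnd
  exact ⟨J, hJ.apply_apply, hJ.apply_apply_eq, hJ.apply_comm, hJ.apply_pos⟩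
end

section
/- Let λ be a σ-finite measure on a measurable space V, E a finite-dimensional real normed vector space, and Ψ : V → E measurable. Let Z ∈ E* and suppose 0 < I₀(Z) = ∫ exp(−⟨Z, Ψ(x)⟩) λ(dx) < ∞; set z = log I₀(Z) and let ρ(x) = exp(−(z + ⟨Z, Ψ(x)⟩)) be the associated generalized Gibbs density, and assume Ψ is integrable with respect to the measure ρ·λ, with mean M = ∫ Ψ(x) ρ(x) λ(dx). Let ρ' : V → [0,∞) be measurable with ∫ ρ' dλ = 1, with Ψ integrable with respect to ρ'·λ and ∫ Ψ(x) ρ'(x) λ(dx) = M, and with x ↦ ρ'(x) log ρ'(x) λ-integrable. Then s_λ(ρ') ≤ s_λ(ρ), and equality holds if and only if ρ' = ρ λ-almost everywhere. In other words, the generalized Gibbs density is the strict maximizer of the λ-entropy among all probability densities with the same mean value of Ψ. -/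
open MeasureTheory Real

/-- Pointwise key inequality: for `0 ≤ a` and `0 < b`,
`a - b ≤ a * log a - a * log b`, with equality iff `a = b`. -/
lemma gibbs_pt_ineq (a b : ℝ) (ha : 0 ≤ a) (hb : 0 < b) :
    a - b ≤ a * Real.log a - a * Real.log b ∧
    (a - b = a * Real.log a - a * Real.log b ↔ a = b) := by
  rcases ha.lt_or_eq with hpos | h0
  · have hba : 0 < b / a := div_pos hb hpos
    have hlog : Real.log (b / a) = Real.log b - Real.log a :=
      Real.log_div hb.ne' hpos.ne'
    have hab : a * (b / a) = b := by field_simp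
    have h1 : Real.log (b / a) ≤ b / a - 1 := Real.log_le_sub_one_of_pos hba
    have h1' : a * Real.log (b / a) ≤ a * (b / a - 1) :=
      mul_le_mul_of_nonneg_left h1 ha
    constructor
    · nlinarith [h1', hab]
    · constructor
      · intro heq
        by_contra hne
        have hba1 : b / a ≠ 1 := by
          intro h
          exact hne ((div_eq_one_iff_eq hpos.ne').mp h).symm
        have h2 : Real.log (b / a) < b / a - 1 :=
          Real.log_lt_sub_one_of_pos hba hba1
        have h2' : a * Real.log (b / a) < a * (b / a - 1) :=
          (mul_lt_mul_iff_right₀ hpos).mpr h2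
        nlinarith [h2', hab]
      · intro h; subst h; ring
  · subst h0
    constructor
    · simp; positivity
    · constructor
      · intro heq; simp at heq; linarith
      · intro h; exact absurd h.symm hb.ne'

/-- The generalized Gibbs density `ρ = exp(-(z + ⟨Z, Ψ⟩))` (with `z = log ∫ exp(-⟨Z, Ψ⟩) dλ`)
is the strict maximizer of the `λ`-entropy among all probability densities with the same
mean value `M` of `Ψ`. -/
theorem gibbs_density_max_entropy
    {V : Type*} [MeasurableSpace V] (lam : Measure V) [SigmaFinite lam]
    {E : Type*} [NormedAddCommGroup E] [NormedSpace ℝ E] [FiniteDimensional ℝ E]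
    [MeasurableSpace E] [BorelSpace E]
    (Ψ : V → E) (hΨ : Measurable Ψ)
    (Z : E →L[ℝ] ℝ)
    (hint : Integrable (fun x => Real.exp (-(Z (Ψ x)))) lam)
    (hpos : 0 < ∫ x, Real.exp (-(Z (Ψ x))) ∂lam)
    (z : ℝ) (hz : z = Real.log (∫ x, Real.exp (-(Z (Ψ x))) ∂lam))
    (ρ : V → ℝ) (hρ : ∀ x, ρ x = Real.exp (-(z + Z (Ψ x))))
    (hΨρ : Integrable (fun x => ρ x • Ψ x) lam)
    (M : E) (hM : M = ∫ x, ρ x • Ψ x ∂lam)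
    (ρ' : V → ℝ) (hρ'meas : Measurable ρ') (hρ'nonneg : ∀ x, 0 ≤ ρ' x)
    (hρ'int : Integrable ρ' lam) (hρ'one : ∫ x, ρ' x ∂lam = 1)
    (hΨρ' : Integrable (fun x => ρ' x • Ψ x) lam)
    (hM' : ∫ x, ρ' x • Ψ x ∂lam = M)
    (hρ'ent : Integrable (fun x => ρ' x * Real.log (ρ' x)) lam) :
    (∫ x, -(ρ' x * Real.log (ρ' x)) ∂lam) ≤ (∫ x, -(ρ x * Real.log (ρ x)) ∂lam) ∧
    ((∫ x, -(ρ' x * Real.log (ρ' x)) ∂lam) = (∫ x, -(ρ x * Real.log (ρ x)) ∂lam) ↔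
      ρ' =ᵐ[lam] ρ) := by
  -- basic facts about ρ
  have hρpos : ∀ x, 0 < ρ x := fun x => by rw [hρ]; exact Real.exp_pos _
  have hlogρ : ∀ x, Real.log (ρ x) = -(z + Z (Ψ x)) := fun x => by
    rw [hρ]; exact Real.log_exp _
  have hρeq : ∀ x, ρ x = Real.exp (-z) * Real.exp (-(Z (Ψ x))) := fun x => by
    rw [hρ, neg_add, Real.exp_add]
  have hρint : Integrable ρ lam := by
    have := hint.const_mul (Real.exp (-z))
    exact this.congr (Filter.Eventually.of_forall fun x => (hρeq x).symm)
  have hρone : ∫ x, ρ x ∂lam = 1 := by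
    calc ∫ x, ρ x ∂lam = ∫ x, Real.exp (-z) * Real.exp (-(Z (Ψ x))) ∂lam :=
          integral_congr_ae (Filter.Eventually.of_forall hρeq)
      _ = Real.exp (-z) * ∫ x, Real.exp (-(Z (Ψ x))) ∂lam := integral_const_mul _ _
      _ = 1 := by
          rw [hz, Real.exp_neg, Real.exp_log hpos]
          exact inv_mul_cancel₀ hpos.ne'
  -- integrals against Z ∘ Ψ
  have hZρ : Integrable (fun x => ρ x * Z (Ψ x)) lam := by
    have := Z.integrable_comp hΨρ
    simpa [_root_.map_smul, smul_eq_mul] using this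
  have hZρ' : Integrable (fun x => ρ' x * Z (Ψ x)) lam := by
    have := Z.integrable_comp hΨρ'
    simpa [_root_.map_smul, smul_eq_mul] using this
  have hZρI : ∫ x, ρ x * Z (Ψ x) ∂lam = Z M := by
    rw [hM]
    have := Z.integral_comp_comm hΨρ
    simpa [_root_.map_smul, smul_eq_mul] using this
  have hZρ'I : ∫ x, ρ' x * Z (Ψ x) ∂lam = Z M := by
    rw [← hM']
    have := Z.integral_comp_comm hΨρ'
    simpa [_root_.map_smul, smul_eq_mul] using this
  -- entropy of ρ
  have hsρ : (∫ x, -(ρ x * Real.log (ρ x)) ∂lam) = z + Z M := by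
    have heq : ∀ x, -(ρ x * Real.log (ρ x)) = z * ρ x + ρ x * Z (Ψ x) := fun x => by
      rw [hlogρ x]; ring
    calc (∫ x, -(ρ x * Real.log (ρ x)) ∂lam)
        = ∫ x, (z * ρ x + ρ x * Z (Ψ x)) ∂lam :=
          integral_congr_ae (Filter.Eventually.of_forall heq)
      _ = (∫ x, z * ρ x ∂lam) + ∫ x, ρ x * Z (Ψ x) ∂lam := by
          exact integral_add (by exact hρint.const_mul z) hZρ
      _ = z + Z M := by rw [integral_const_mul, hρone, hZρI, mul_one]
  -- the nonnegative function g
  set g : V → ℝ := fun x =>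
    ρ' x * Real.log (ρ' x) + (z * ρ' x + ρ' x * Z (Ψ x)) - ρ' x + ρ x with hg
  have hgkey : ∀ x, g x =
      (ρ' x * Real.log (ρ' x) - ρ' x * Real.log (ρ x)) - (ρ' x - ρ x) := fun x => by
    rw [hg]; simp only; rw [hlogρ x]; ring
  have hgnn : ∀ x, 0 ≤ g x := fun x => by
    rw [hgkey x]
    have := (gibbs_pt_ineq (ρ' x) (ρ x) (hρ'nonneg x) (hρpos x)).1
    linarith
  have hgzero : ∀ x, g x = 0 ↔ ρ' x = ρ x := fun x => by
    rw [hgkey x]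
    have := (gibbs_pt_ineq (ρ' x) (ρ x) (hρ'nonneg x) (hρpos x)).2
    constructor
    · intro h; exact this.mp (by linarith)
    · intro h; have := this.mpr h; linarith
  have hi1 : Integrable (fun x => z * ρ' x + ρ' x * Z (Ψ x)) lam := by
    exact (hρ'int.const_mul z).add hZρ'
  have hi2 : Integrable (fun x => ρ' x * Real.log (ρ' x) + (z * ρ' x + ρ' x * Z (Ψ x))) lam := by
    exact hρ'ent.add hi1
  have hi3 : Integrable
      (fun x => ρ' x * Real.log (ρ' x) + (z * ρ' x + ρ' x * Z (Ψ x)) - ρ' x) lam := by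
    exact hi2.sub hρ'int
  have hgint : Integrable g lam := by
    rw [hg]; exact hi3.add hρint
  have hgI : ∫ x, g x ∂lam
      = (∫ x, ρ' x * Real.log (ρ' x) ∂lam) + z + Z M := by
    rw [hg]
    rw [integral_add hi3 hρint, integral_sub hi2 hρ'int, integral_add hρ'ent hi1,
      integral_add (by exact hρ'int.const_mul z) hZρ',
      integral_const_mul, hρ'one, hZρ'I, hρone]
    ring
  have hsρ' : (∫ x, -(ρ' x * Real.log (ρ' x)) ∂lam)
      = -(∫ x, ρ' x * Real.log (ρ' x) ∂lam) := integral_neg _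
  have hdiff : (∫ x, -(ρ x * Real.log (ρ x)) ∂lam)
      - (∫ x, -(ρ' x * Real.log (ρ' x)) ∂lam) = ∫ x, g x ∂lam := by
    rw [hsρ, hsρ', hgI]; ring
  have hgpos : 0 ≤ ∫ x, g x ∂lam :=
    integral_nonneg hgnn
  constructor
  · linarith
  · constructor
    · intro heq
      have hg0 : ∫ x, g x ∂lam = 0 := by linarith
      have := (integral_eq_zero_iff_of_nonneg hgnn hgint).mp hg0
      filter_upwards [this] with x hx
      exact (hgzero x).mp hx
    · intro heq
      have hg0 : g =ᵐ[lam] 0 := by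
        filter_upwards [heq] with x hx
        exact (hgzero x).mpr hx
      have : ∫ x, g x ∂lam = 0 := by
        rw [integral_congr_ae hg0]; simp
      linarith
end

section
/- Let λ be a nonzero σ-finite measure on a measurable space V, E a finite-dimensional real normed vector space, Ψ : V → E measurable, and Ω = {Z ∈ E* : ∫ exp(−⟨Z, Ψ(x)⟩) λ(dx) < ∞}. Assume that the values of Ψ are not λ-almost everywhere contained in any affine hyperplane of E, i.e. there is no nonzero W ∈ E* and c ∈ ℝ with ⟨W, Ψ(x)⟩ = c for λ-almost every x. Then the function Z ↦ log I₀(Z) is strictly convex on Ω: for distinct Z₀, Z₁ ∈ Ω and t ∈ (0,1), log I₀((1−t)Z₀ + tZ₁) < (1−t) log I₀(Z₀) + t log I₀(Z₁). -/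
/-!
Put `f = exp (-⟨Z₀, Ψ⟩)` and `g = exp (-⟨Z₁, Ψ⟩)`, so that the integrand at `(1 - t) Z₀ + t Z₁` is
`f ^ (1 - t) * g ^ t`. Integrating the weighted AM-GM inequality
`(f / ∫ f) ^ (1 - t) * (g / ∫ g) ^ t ≤ (1 - t) f / ∫ f + t g / ∫ g` gives Hölder's inequality
`∫ f ^ (1 - t) * g ^ t ≤ (∫ f) ^ (1 - t) * (∫ g) ^ t`, and AM-GM is strict wherever
`f / ∫ f ≠ g / ∫ g`. Equality would therefore force `g / f = exp ⟨Z₀ - Z₁, Ψ⟩` to be a.e. constant,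
i.e. `Ψ` to lie a.e. in an affine hyperplane. Taking logarithms gives strict convexity.
-/

open MeasureTheory Real

section Holder

variable {α : Type*} [MeasurableSpace α] {μ : Measure α} {f g : α → ℝ} {t : ℝ}

theorem integrable_rpow_mul_rpow (hf_nn : 0 ≤ᵐ[μ] f) (hg_nn : 0 ≤ᵐ[μ] g)
    (hf : Integrable f μ) (hg : Integrable g μ) (ht0 : 0 ≤ t) (ht1 : t ≤ 1) :
    Integrable (fun x ↦ f x ^ (1 - t) * g x ^ t) μ := by
  refine ((hf.const_mul (1 - t)).add (hg.const_mul t)).mono'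
    ((hf.aemeasurable.pow_const _).mul (hg.aemeasurable.pow_const _)).aestronglyMeasurable ?_
  filter_upwards [hf_nn, hg_nn] with x hfx hgx
  rw [norm_of_nonneg (mul_nonneg (rpow_nonneg hfx _) (rpow_nonneg hgx _))]
  exact geom_mean_le_arith_mean2_weighted (by linarith) ht0 hfx hgx (by ring)

theorem integral_rpow_mul_rpow_lt_one (hf_nn : 0 ≤ᵐ[μ] f) (hg_nn : 0 ≤ᵐ[μ] g)
    (hf : Integrable f μ) (hg : Integrable g μ) (hf1 : ∫ x, f x ∂μ = 1) (hg1 : ∫ x, g x ∂μ = 1)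
    (hfg : ¬ f =ᵐ[μ] g) (ht0 : 0 < t) (ht1 : t < 1) :
    ∫ x, f x ^ (1 - t) * g x ^ t ∂μ < 1 := by
  have hu := integrable_rpow_mul_rpow hf_nn hg_nn hf hg ht0.le ht1.le
  have hv := (hf.const_mul (1 - t)).add (hg.const_mul t)
  have h_amgm : (fun x ↦ f x ^ (1 - t) * g x ^ t) ≤ᵐ[μ] fun x ↦ (1 - t) * f x + t * g x := by
    filter_upwards [hf_nn, hg_nn] with x hfx hgx
    exact geom_mean_le_arith_mean2_weighted (by linarith) ht0.le hfx hgx (by ring)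
  have h_ne : ∫ x, f x ^ (1 - t) * g x ^ t ∂μ ≠ ∫ x, (1 - t) * f x + t * g x ∂μ := by
    refine fun h ↦ hfg ?_
    filter_upwards [(integral_eq_iff_of_ae_le hu hv h_amgm).1 h, hf_nn, hg_nn] with x hx hfx hgx
    exact (geom_mean_eq_arith_mean2_weighted_iff_of_pos (by linarith) ht0 hfx hgx (by ring)).1 hx
  calc ∫ x, f x ^ (1 - t) * g x ^ t ∂μ < ∫ x, (1 - t) * f x + t * g x ∂μ :=
        (integral_mono_ae hu hv h_amgm).lt_of_ne h_ne
    _ = 1 := by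
        rw [integral_add (hf.const_mul _) (hg.const_mul _), integral_const_mul, integral_const_mul,
          hf1, hg1]
        ring

/-- Strict Hölder inequality for the exponents `1 / (1 - t)` and `1 / t`. -/
theorem integral_rpow_mul_rpow_lt (hf_nn : 0 ≤ᵐ[μ] f) (hg_nn : 0 ≤ᵐ[μ] g)
    (hf : Integrable f μ) (hg : Integrable g μ) (hf0 : 0 < ∫ x, f x ∂μ) (hg0 : 0 < ∫ x, g x ∂μ)
    (hfg : ∀ c : ℝ, ¬ ∀ᵐ x ∂μ, g x = c * f x) (ht0 : 0 < t) (ht1 : t < 1) :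
    ∫ x, f x ^ (1 - t) * g x ^ t ∂μ < (∫ x, f x ∂μ) ^ (1 - t) * (∫ x, g x ∂μ) ^ t := by
  set a := ∫ x, f x ∂μ
  set b := ∫ x, g x ∂μ
  have h_scale : ∀ᵐ x ∂μ, (f x / a) ^ (1 - t) * (g x / b) ^ t =
      f x ^ (1 - t) * g x ^ t / (a ^ (1 - t) * b ^ t) := by
    filter_upwards [hf_nn, hg_nn] with x hfx hgx
    rw [div_rpow hfx hf0.le, div_rpow hgx hg0.le]
    ring
  have h_normalized : ¬ (fun x ↦ f x / a) =ᵐ[μ] fun x ↦ g x / b := by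
    refine fun h ↦ hfg (b / a) ?_
    filter_upwards [h] with x hx
    field_simp at hx ⊢
    linarith
  have h_lt := integral_rpow_mul_rpow_lt_one (hf_nn.mono fun x hx ↦ div_nonneg hx hf0.le)
    (hg_nn.mono fun x hx ↦ div_nonneg hx hg0.le) (hf.div_const a) (hg.div_const b)
    (by rw [integral_div, div_self hf0.ne']) (by rw [integral_div, div_self hg0.ne'])
    h_normalized ht0 ht1
  rwa [integral_congr_ae h_scale, integral_div, div_lt_one (by positivity)] at h_lt

theorem integral_pos_of_forall_pos (hμ : μ ≠ 0) (hf_pos : ∀ x, 0 < f x) (hf : Integrable f μ) :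
    0 < ∫ x, f x ∂μ := by
  rw [integral_pos_iff_support_of_nonneg (fun x ↦ (hf_pos x).le) hf,
    Function.support_eq_univ fun x ↦ (hf_pos x).ne']
  exact Measure.measure_univ_pos.2 hμ

theorem log_integral_rpow_mul_rpow_lt (hf_pos : ∀ x, 0 < f x) (hg_pos : ∀ x, 0 < g x)
    (hf : Integrable f μ) (hg : Integrable g μ) (hfg : ∀ c : ℝ, ¬ ∀ᵐ x ∂μ, g x = c * f x)
    (ht0 : 0 < t) (ht1 : t < 1) :
    log (∫ x, f x ^ (1 - t) * g x ^ t ∂μ) <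
      (1 - t) * log (∫ x, f x ∂μ) + t * log (∫ x, g x ∂μ) := by
  have hμ : μ ≠ 0 := by
    rintro rfl
    exact hfg 0 (by simp)
  have hf0 := integral_pos_of_forall_pos hμ hf_pos hf
  have hg0 := integral_pos_of_forall_pos hμ hg_pos hg
  have hf_nn : 0 ≤ᵐ[μ] f := ae_of_all _ fun x ↦ (hf_pos x).le
  have hg_nn : 0 ≤ᵐ[μ] g := ae_of_all _ fun x ↦ (hg_pos x).le
  have h_lhs := integral_pos_of_forall_pos hμ
    (fun x ↦ mul_pos (rpow_pos_of_pos (hf_pos x) _) (rpow_pos_of_pos (hg_pos x) _))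
    (integrable_rpow_mul_rpow hf_nn hg_nn hf hg ht0.le ht1.le)
  calc log (∫ x, f x ^ (1 - t) * g x ^ t ∂μ)
      < log ((∫ x, f x ∂μ) ^ (1 - t) * (∫ x, g x ∂μ) ^ t) :=
        log_lt_log h_lhs (integral_rpow_mul_rpow_lt hf_nn hg_nn hf hg hf0 hg0 hfg ht0 ht1)
    _ = (1 - t) * log (∫ x, f x ∂μ) + t * log (∫ x, g x ∂μ) := by
        rw [log_mul (by positivity) (by positivity), log_rpow hf0, log_rpow hg0]

end Holder

theorem log_partition_strictConvexOn_general
    {V : Type*} [MeasurableSpace V] (lam : Measure V)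
    {E : Type*} [NormedAddCommGroup E] [NormedSpace ℝ E]
    [MeasurableSpace E] [BorelSpace E]
    (Ψ : V → E) (hΨ : Measurable Ψ)
    (hhyp : ¬ ∃ (W : E →L[ℝ] ℝ) (c : ℝ), W ≠ 0 ∧ ∀ᵐ x ∂lam, W (Ψ x) = c)
    (Z₀ Z₁ : E →L[ℝ] ℝ) (hZ : Z₀ ≠ Z₁)
    (h₀ : ∫⁻ x, ENNReal.ofReal (Real.exp (-(Z₀ (Ψ x)))) ∂lam < ⊤)
    (h₁ : ∫⁻ x, ENNReal.ofReal (Real.exp (-(Z₁ (Ψ x)))) ∂lam < ⊤)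
    (t : ℝ) (ht : t ∈ Set.Ioo (0 : ℝ) 1) :
    Real.log (∫ x, Real.exp (-(((1 - t) • Z₀ + t • Z₁) (Ψ x))) ∂lam) <
      (1 - t) * Real.log (∫ x, Real.exp (-(Z₀ (Ψ x))) ∂lam) +
        t * Real.log (∫ x, Real.exp (-(Z₁ (Ψ x))) ∂lam) := by
  have integrable_exp : ∀ Z : E →L[ℝ] ℝ, ∫⁻ x, ENNReal.ofReal (exp (-(Z (Ψ x)))) ∂lam < ⊤ →
      Integrable (fun x ↦ exp (-(Z (Ψ x)))) lam := fun Z hfin ↦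
    ⟨(by fun_prop : Measurable fun x ↦ exp (-(Z (Ψ x)))).aestronglyMeasurable,
      (hasFiniteIntegral_iff_ofReal (ae_of_all _ fun _ ↦ (exp_pos _).le)).2 hfin⟩
  have h_interp : ∀ x, exp (-(((1 - t) • Z₀ + t • Z₁) (Ψ x))) =
      exp (-(Z₀ (Ψ x))) ^ (1 - t) * exp (-(Z₁ (Ψ x))) ^ t := fun x ↦ by
    simp only [add_apply, smul_apply, smul_eq_mul, ← exp_mul, ← exp_add]
    ring_nf
  have h_not_proportional : ∀ c : ℝ,
      ¬ ∀ᵐ x ∂lam, exp (-(Z₁ (Ψ x))) = c * exp (-(Z₀ (Ψ x))) := fun c hc ↦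
    hhyp ⟨Z₀ - Z₁, log c, sub_ne_zero.2 hZ, hc.mono fun x hx ↦ by
      have h_ratio : exp (Z₀ (Ψ x) - Z₁ (Ψ x)) = c := by
        rw [sub_eq_add_neg, exp_add, hx, mul_left_comm, ← exp_add, add_neg_cancel, exp_zero,
          mul_one]
      rw [sub_apply, ← h_ratio, log_exp]⟩
  simp_rw [h_interp]
  exact log_integral_rpow_mul_rpow_lt (fun _ ↦ exp_pos _) (fun _ ↦ exp_pos _)
    (integrable_exp Z₀ h₀) (integrable_exp Z₁ h₁) h_not_proportional ht.1 ht.2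

/-- If `λ ≠ 0` and the values of `Ψ` are not `λ`-almost everywhere contained in any
affine hyperplane of `E`, then the log-partition function `Z ↦ log I₀(Z)` is strictly
convex on the set `Ω` of those `Z` for which `I₀(Z)` is finite. -/
theorem log_partition_strictConvexOn
    {V : Type*} [MeasurableSpace V] (lam : Measure V) [SigmaFinite lam]
    (hlam : lam ≠ 0)
    {E : Type*} [NormedAddCommGroup E] [NormedSpace ℝ E] [FiniteDimensional ℝ E]
    [MeasurableSpace E] [BorelSpace E]
    (Ψ : V → E) (hΨ : Measurable Ψ)
    (hhyp : ¬ ∃ (W : E →L[ℝ] ℝ) (c : ℝ), W ≠ 0 ∧ ∀ᵐ x ∂lam, W (Ψ x) = c)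
    (Z₀ Z₁ : E →L[ℝ] ℝ) (hZ : Z₀ ≠ Z₁)
    (h₀ : ∫⁻ x, ENNReal.ofReal (Real.exp (-(Z₀ (Ψ x)))) ∂lam < ⊤)
    (h₁ : ∫⁻ x, ENNReal.ofReal (Real.exp (-(Z₁ (Ψ x)))) ∂lam < ⊤)
    (t : ℝ) (ht : t ∈ Set.Ioo (0 : ℝ) 1) :
    Real.log (∫ x, Real.exp (-(((1 - t) • Z₀ + t • Z₁) (Ψ x))) ∂lam) <
      (1 - t) * Real.log (∫ x, Real.exp (-(Z₀ (Ψ x))) ∂lam) +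
        t * Real.log (∫ x, Real.exp (-(Z₁ (Ψ x))) ∂lam) :=
  log_partition_strictConvexOn_general lam Ψ hΨ hhyp Z₀ Z₁ hZ h₀ h₁ t ht
end

section
/- Let λ be a σ-finite measure on a measurable space V, E a finite-dimensional real normed vector space, Ψ : V → E measurable, and Ω = {Z ∈ E* : ∫ exp(−⟨Z, Ψ(x)⟩) λ(dx) < ∞}. If Z belongs to the topological interior of Ω in E*, then x ↦ ‖Ψ(x)‖ exp(−⟨Z, Ψ(x)⟩) is λ-integrable, and the function I₀ : W ↦ ∫ exp(−⟨W, Ψ(x)⟩) λ(dx) is Fréchet-differentiable at Z with derivative the linear map W ↦ −∫ ⟨W, Ψ(x)⟩ exp(−⟨Z, Ψ(x)⟩) λ(dx). In other words, at interior points of Ω the partition function can be differentiated under the integral sign, and its differential is given by minus the (unnormalized) mean of Ψ. -/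
open MeasureTheory Metric

/-!
By compactness of balls in the finite-dimensional dual, finitely many functionals `W` of norm
`≤ 2r` satisfy `max_W W v ≥ r ‖v‖` for every `v`, so `exp (r ‖v‖) ≤ ∑_W exp (W v)`. Multiplying by
`exp (-Z v)` shows that `exp (r ‖Ψ‖) exp (-Z Ψ)` is integrable once `closedBall Z (2r) ⊆ Ω`, hence,
as `r t ≤ exp (r t)`, so is `‖Ψ‖ exp (r ‖Ψ‖) exp (-Z Ψ)` once `closedBall Z (4r) ⊆ Ω`. The latter
dominates the derivative `-exp (-W Ψ) ⟨·, Ψ⟩` of the integrand for all `W ∈ closedBall Z r`, so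
one can differentiate under the integral sign.
-/

theorem ContinuousLinearMap.norm_apply_le_norm {𝕜 E F : Type*} [NontriviallyNormedField 𝕜]
    [NormedAddCommGroup E] [NormedSpace 𝕜 E] [NormedAddCommGroup F] [NormedSpace 𝕜 F] (v : E) :
    ‖ContinuousLinearMap.apply 𝕜 F v‖ ≤ ‖v‖ :=
  opNorm_le_bound _ (norm_nonneg v) fun W => by rw [mul_comm]; exact W.le_opNorm v

theorem exists_finset_dual_forall_exists_mul_norm_le_apply
    {E : Type*} [NormedAddCommGroup E] [NormedSpace ℝ E] [FiniteDimensional ℝ E]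
    {r : ℝ} (hr : 0 < r) :
    ∃ S : Finset (E →L[ℝ] ℝ), (∀ W ∈ S, ‖W‖ ≤ 2 * r) ∧ ∀ v : E, ∃ W ∈ S, r * ‖v‖ ≤ W v := by
  obtain ⟨t, htB, htfin, hcover⟩ :=
    (isCompact_closedBall (0 : E →L[ℝ] ℝ) (2 * r)).finite_cover_balls hr
  refine ⟨htfin.toFinset, fun W hW => mem_closedBall_zero_iff.1 (htB (htfin.mem_toFinset.1 hW)),
    fun v => ?_⟩
  obtain ⟨g, hg, hgv⟩ := exists_dual_vector'' ℝ v
  have hU : (2 * r) • g ∈ closedBall (0 : E →L[ℝ] ℝ) (2 * r) := by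
    rw [mem_closedBall_zero_iff, norm_smul, Real.norm_of_nonneg (by positivity)]
    exact mul_le_of_le_one_right (by positivity) hg
  obtain ⟨W, hWt, hUW⟩ := Set.mem_iUnion₂.1 (hcover hU)
  refine ⟨W, htfin.mem_toFinset.2 hWt, ?_⟩
  have hclose : ((2 * r) • g - W) v ≤ r * ‖v‖ :=
    calc ((2 * r) • g - W) v ≤ ‖(2 * r) • g - W‖ * ‖v‖ :=
          (le_abs_self _).trans (((2 * r) • g - W).le_opNorm v)
      _ ≤ r * ‖v‖ := by
        gcongr
        rw [← dist_eq_norm]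
        exact (mem_ball.1 hUW).le
  simp only [sub_apply, smul_apply, smul_eq_mul, hgv, RCLike.ofReal_real_eq_id, id] at hclose
  linarith

section ExponentialMoments

variable {V E : Type*} [MeasurableSpace V] {μ : Measure V} [NormedAddCommGroup E]
  [NormedSpace ℝ E] {Ψ : V → E} {Z : E →L[ℝ] ℝ} {s : ℝ}

theorem exp_neg_apply_le_of_mem_closedBall {W : E →L[ℝ] ℝ} (hW : W ∈ closedBall Z s) (v : E) :
    Real.exp (-(W v)) ≤ Real.exp (s * ‖v‖) * Real.exp (-(Z v)) := by
  rw [← Real.exp_add, Real.exp_le_exp]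
  have : (Z - W) v ≤ s * ‖v‖ :=
    calc (Z - W) v ≤ ‖Z - W‖ * ‖v‖ := (le_abs_self _).trans ((Z - W).le_opNorm v)
      _ ≤ s * ‖v‖ := by
        gcongr
        rw [← dist_eq_norm, dist_comm]
        exact hW
  simp only [sub_apply] at this
  linarith

theorem integrable_exp_neg_smul (hΨ : AEStronglyMeasurable Ψ μ)
    (hmean : Integrable (fun x => ‖Ψ x‖ * Real.exp (-(Z (Ψ x)))) μ) :
    Integrable (fun x => Real.exp (-(Z (Ψ x))) • Ψ x) μ :=
  hmean.mono' ((by fun_prop : Continuous fun v : E => Real.exp (-(Z v)) • v)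
    |>.comp_aestronglyMeasurable hΨ) (ae_of_all _ fun x => by
      rw [norm_smul, Real.norm_of_nonneg (Real.exp_pos _).le, mul_comm])

theorem hasFDerivAt_integral_exp_neg_apply [CompleteSpace E] (hΨ : AEStronglyMeasurable Ψ μ)
    (hs : 0 < s)
    (hZ : Integrable (fun x => Real.exp (-(Z (Ψ x)))) μ)
    (hmean : Integrable (fun x => ‖Ψ x‖ * Real.exp (-(Z (Ψ x)))) μ)
    (hbound : Integrable (fun x => ‖Ψ x‖ * Real.exp (s * ‖Ψ x‖) * Real.exp (-(Z (Ψ x)))) μ) :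
    HasFDerivAt (fun W : E →L[ℝ] ℝ => ∫ x, Real.exp (-(W (Ψ x))) ∂μ)
      (-ContinuousLinearMap.apply ℝ ℝ (∫ x, Real.exp (-(Z (Ψ x))) • Ψ x ∂μ)) Z := by
  have h : HasFDerivAt (fun W : E →L[ℝ] ℝ => ∫ x, Real.exp (-(W (Ψ x))) ∂μ)
      (∫ x, Real.exp (-(Z (Ψ x))) • -ContinuousLinearMap.apply ℝ ℝ (Ψ x) ∂μ) Z :=
    hasFDerivAt_integral_of_dominated_of_fderiv_le (closedBall_mem_nhds Z hs)
      (Filter.Eventually.of_forall fun W => ?_) hZ ?_ (ae_of_all _ fun x W hW => ?_) hbound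
      (ae_of_all _ fun x W _ => (ContinuousLinearMap.apply ℝ ℝ (Ψ x)).hasFDerivAt.neg.exp)
  · refine h.congr_fderiv ?_
    simpa only [map_smul, neg_apply] using (-ContinuousLinearMap.apply ℝ ℝ).integral_comp_comm
      (𝕜 := ℝ) (Fₗ := (E →L[ℝ] ℝ) →L[ℝ] ℝ) (integrable_exp_neg_smul hΨ hmean)
  · exact (by fun_prop : Continuous fun v : E => Real.exp (-(W v))).comp_aestronglyMeasurable hΨ
  · exact (by fun_prop : Continuous fun v : E =>
      Real.exp (-(Z v)) • -ContinuousLinearMap.apply ℝ ℝ v).comp_aestronglyMeasurable hΨ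
  · rw [norm_smul, norm_neg, Real.norm_of_nonneg (Real.exp_pos _).le, mul_comm ‖Ψ x‖,
      mul_right_comm]
    exact mul_le_mul (exp_neg_apply_le_of_mem_closedBall hW (Ψ x))
      (ContinuousLinearMap.norm_apply_le_norm _) (norm_nonneg _) (by positivity)

variable [FiniteDimensional ℝ E]

theorem integrable_exp_mul_norm_mul_exp_neg (hΨ : AEStronglyMeasurable Ψ μ) (hs : 0 < s)
    (h : ∀ W ∈ closedBall Z (2 * s), Integrable (fun x => Real.exp (-(W (Ψ x)))) μ) :
    Integrable (fun x => Real.exp (s * ‖Ψ x‖) * Real.exp (-(Z (Ψ x)))) μ := by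
  obtain ⟨S, hSnorm, hS⟩ := exists_finset_dual_forall_exists_mul_norm_le_apply (E := E) hs
  have hsum : ∀ v : E,
      Real.exp (s * ‖v‖) * Real.exp (-(Z v)) ≤ ∑ W ∈ S, Real.exp (-((Z - W) v)) := by
    intro v
    obtain ⟨W, hW, hle⟩ := hS v
    calc Real.exp (s * ‖v‖) * Real.exp (-(Z v)) ≤ Real.exp (-((Z - W) v)) := by
          rw [← Real.exp_add, Real.exp_le_exp, sub_apply]
          linarith
      _ ≤ _ := Finset.single_le_sum (f := fun W => Real.exp (-((Z - W) v)))
          (fun W _ => (Real.exp_pos _).le) hW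
  refine (integrable_finsetSum S fun W hW => h (Z - W) ?_).mono' ?_ (ae_of_all _ fun x => ?_)
  · rw [mem_closedBall, dist_eq_norm, sub_sub_cancel_left, norm_neg]
    exact hSnorm W hW
  · exact (by fun_prop : Continuous fun v : E => Real.exp (s * ‖v‖) * Real.exp (-(Z v)))
      |>.comp_aestronglyMeasurable hΨ
  · rw [Real.norm_of_nonneg (by positivity)]
    exact hsum (Ψ x)

theorem integrable_norm_mul_exp_mul_norm_mul_exp_neg (hΨ : AEStronglyMeasurable Ψ μ)
    (hs : 0 < s)
    (h : ∀ W ∈ closedBall Z (4 * s), Integrable (fun x => Real.exp (-(W (Ψ x)))) μ) :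
    Integrable (fun x => ‖Ψ x‖ * Real.exp (s * ‖Ψ x‖) * Real.exp (-(Z (Ψ x)))) μ := by
  have h2s := integrable_exp_mul_norm_mul_exp_neg hΨ (mul_pos two_pos hs) fun W hW =>
    h W (by rwa [← mul_assoc, show (2 : ℝ) * 2 = 4 by norm_num] at hW)
  refine (h2s.const_mul s⁻¹).mono' ?_ (ae_of_all _ fun x => ?_)
  · exact (by fun_prop : Continuous fun v : E => ‖v‖ * Real.exp (s * ‖v‖) * Real.exp (-(Z v)))
      |>.comp_aestronglyMeasurable hΨ
  set t := ‖Ψ x‖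
  have ht : s * t ≤ Real.exp (s * t) := by linarith [Real.add_one_le_exp (s * t)]
  rw [Real.norm_of_nonneg (by positivity)]
  calc t * Real.exp (s * t) * Real.exp (-(Z (Ψ x)))
      = s⁻¹ * (s * t) * Real.exp (s * t) * Real.exp (-(Z (Ψ x))) := by field_simp
    _ ≤ s⁻¹ * Real.exp (s * t) * Real.exp (s * t) * Real.exp (-(Z (Ψ x))) := by gcongr
    _ = s⁻¹ * (Real.exp (2 * s * t) * Real.exp (-(Z (Ψ x)))) := by
      rw [mul_assoc 2, two_mul, Real.exp_add]
      ring

end ExponentialMoments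

theorem partition_function_differentiable_interior_general
    {V : Type*} [MeasurableSpace V] (lam : Measure V)
    {E : Type*} [NormedAddCommGroup E] [NormedSpace ℝ E] [FiniteDimensional ℝ E]
    [MeasurableSpace E] [BorelSpace E]
    (Ψ : V → E) (hΨ : Measurable Ψ)
    (Z : E →L[ℝ] ℝ)
    (hZ : Z ∈ interior {W : E →L[ℝ] ℝ |
      ∫⁻ x, ENNReal.ofReal (Real.exp (-(W (Ψ x)))) ∂lam < ⊤}) :
    Integrable (fun x => ‖Ψ x‖ * Real.exp (-(Z (Ψ x)))) lam ∧
    ∃ D : (E →L[ℝ] ℝ) →L[ℝ] ℝ,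
      (∀ W : E →L[ℝ] ℝ, D W = -∫ x, (W (Ψ x)) * Real.exp (-(Z (Ψ x))) ∂lam) ∧
      HasFDerivAt (fun W : E →L[ℝ] ℝ => ∫ x, Real.exp (-(W (Ψ x))) ∂lam) D Z := by
  obtain ⟨ε, hε, hball⟩ := Metric.isOpen_iff.1 isOpen_interior Z hZ
  have hΩ : ball Z ε ⊆ {W : E →L[ℝ] ℝ |
      ∫⁻ x, ENNReal.ofReal (Real.exp (-(W (Ψ x)))) ∂lam < ⊤} := hball.trans interior_subset
  have hs : 0 < ε / 5 := by positivity
  have hint : ∀ W ∈ closedBall Z (4 * (ε / 5)),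
      Integrable (fun x => Real.exp (-(W (Ψ x)))) lam := fun W hW =>
    ⟨(by fun_prop : Continuous fun v : E => Real.exp (-(W v))).comp_aestronglyMeasurable
        hΨ.aestronglyMeasurable,
      (hasFiniteIntegral_iff_ofReal (ae_of_all _ fun _ => (Real.exp_pos _).le)).2
        (hΩ (closedBall_subset_ball (by linarith) hW))⟩
  have hbound := integrable_norm_mul_exp_mul_norm_mul_exp_neg hΨ.aestronglyMeasurable hs hint
  have hmean : Integrable (fun x => ‖Ψ x‖ * Real.exp (-(Z (Ψ x)))) lam := by
    refine hbound.mono' ?_ (ae_of_all _ fun x => ?_)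
    · exact (by fun_prop : Continuous fun v : E => ‖v‖ * Real.exp (-(Z v)))
        |>.comp_aestronglyMeasurable hΨ.aestronglyMeasurable
    · rw [Real.norm_of_nonneg (by positivity), mul_right_comm]
      exact le_mul_of_one_le_right (by positivity) (Real.one_le_exp (by positivity))
  refine ⟨hmean, _, fun W => ?_, hasFDerivAt_integral_exp_neg_apply hΨ.aestronglyMeasurable hs
    (hint Z (mem_closedBall_self (by positivity))) hmean hbound⟩
  rw [neg_apply, ContinuousLinearMap.apply_apply,
    ← W.integral_comp_comm (integrable_exp_neg_smul hΨ.aestronglyMeasurable hmean)]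
  simp only [map_smul, smul_eq_mul, mul_comm]

/-- At an interior point `Z` of the set `Ω = {Z : I₀(Z) < ∞}`, the function
`x ↦ ‖Ψ(x)‖ exp(-⟨Z, Ψ(x)⟩)` is `λ`-integrable and the partition function
`I₀ : W ↦ ∫ exp(-⟨W, Ψ(x)⟩) dλ` is Fréchet-differentiable at `Z`, with derivative the
linear map `W ↦ -∫ ⟨W, Ψ(x)⟩ exp(-⟨Z, Ψ(x)⟩) dλ` (differentiation under the integral
sign). -/
theorem partition_function_differentiable_interior
    {V : Type*} [MeasurableSpace V] (lam : Measure V) [SigmaFinite lam]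
    {E : Type*} [NormedAddCommGroup E] [NormedSpace ℝ E] [FiniteDimensional ℝ E]
    [MeasurableSpace E] [BorelSpace E]
    (Ψ : V → E) (hΨ : Measurable Ψ)
    (Z : E →L[ℝ] ℝ)
    (hZ : Z ∈ interior {W : E →L[ℝ] ℝ |
      ∫⁻ x, ENNReal.ofReal (Real.exp (-(W (Ψ x)))) ∂lam < ⊤}) :
    Integrable (fun x => ‖Ψ x‖ * Real.exp (-(Z (Ψ x)))) lam ∧
    ∃ D : (E →L[ℝ] ℝ) →L[ℝ] ℝ,
      (∀ W : E →L[ℝ] ℝ, D W = -∫ x, (W (Ψ x)) * Real.exp (-(Z (Ψ x))) ∂lam) ∧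
      HasFDerivAt (fun W : E →L[ℝ] ℝ => ∫ x, Real.exp (-(W (Ψ x))) ∂lam) D Z :=
  partition_function_differentiable_interior_general lam Ψ hΨ Z hZ
end

section
/- For every natural number n ≥ 2, there are exactly two group homomorphisms from the symmetric group S_n (the group of permutations of a set with n elements) to the circle group of complex numbers of modulus 1: the trivial character and the signature character. Equivalently, the set of group homomorphisms from Equiv.Perm (Fin n) to the circle group has cardinality 2. -/
/-- `-1` as an element of the circle group. -/
noncomputable def negOneCircle : Circle := ⟨-1, by norm_num [Submonoid.unitSphere, mem_sphere_iff_norm]⟩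

lemma negOneCircle_coe : (negOneCircle : ℂ) = -1 := rfl

lemma negOneCircle_mul_self : negOneCircle * negOneCircle = 1 := by
  ext
  rw [Circle.coe_mul, negOneCircle_coe, Circle.coe_one]
  ring

/-- The character of `ℤˣ` sending `-1` to `-1` on the circle. -/
noncomputable def signChar : ℤˣ →* Circle where
  toFun x := if x = 1 then 1 else negOneCircle
  map_one' := by simp
  map_mul' x y := by
    rcases Int.units_eq_one_or x with rfl | rfl <;>
      rcases Int.units_eq_one_or y with rfl | rfl <;>
        simp [negOneCircle_mul_self]

lemma negOneCircle_ne_one : negOneCircle ≠ 1 := by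
  intro h
  have : (negOneCircle : ℂ) = 1 := by rw [h, Circle.coe_one]
  rw [negOneCircle_coe] at this
  norm_num at this

/-- For `n ≥ 2`, the symmetric group `S_n` has exactly two characters, i.e. group
homomorphisms into the circle group of complex numbers of modulus 1 (the trivial one
and the signature): the set of such homomorphisms has cardinality 2. -/
theorem card_characters_symmetric_group (n : ℕ) (hn : 2 ≤ n) :
    Nat.card (Equiv.Perm (Fin n) →* Circle) = 2 := by
  set a : Fin n := ⟨0, by omega⟩ with ha
  set b : Fin n := ⟨1, by omega⟩ with hb
  have h01 : a ≠ b := by simp [ha, hb, Fin.ext_iff]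
  set s : Equiv.Perm (Fin n) := Equiv.swap a b with hs
  set σ : Equiv.Perm (Fin n) →* Circle := signChar.comp Equiv.Perm.sign with hσ
  have hσs : σ s = negOneCircle := by
    have : Equiv.Perm.sign s = -1 := Equiv.Perm.sign_swap h01
    simp [hσ, signChar, this]
  rw [Nat.card_eq_two_iff]
  refine ⟨1, σ, ?_, ?_⟩
  · intro h
    have := congrArg (fun f => f s) h
    simp only [MonoidHom.one_apply] at this
    exact negOneCircle_ne_one (by rw [← hσs, ← this])
  · ext f
    simp only [Set.mem_insert_iff, Set.mem_singleton_iff, Set.mem_univ, iff_true]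
    -- the value of f on any swap equals f s
    have hswap : ∀ t : Equiv.Perm (Fin n), t.IsSwap → f t = f s := by
      rintro t ⟨x, y, hxy, rfl⟩
      have hc : IsConj (Equiv.swap x y) s := Equiv.Perm.isConj_swap hxy h01
      obtain ⟨g, hg⟩ := hc
      have := congrArg f hg
      simpa [mul_comm, mul_assoc, mul_left_comm] using this
    -- f s squares to 1
    have hss : s * s = 1 := Equiv.swap_mul_self _ _
    have hfs : f s * f s = 1 := by rw [← map_mul, hss, map_one]
    have hsq : (f s : ℂ) * (f s : ℂ) = 1 := by
      have := congrArg Subtype.val hfs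
      rwa [Circle.coe_mul] at this
    rcases mul_self_eq_one_iff.mp hsq with h1 | h1
    · left
      symm
      refine MonoidHom.eq_of_eqOn_dense Equiv.Perm.closure_isSwap ?_
      intro t ht
      rw [MonoidHom.one_apply, hswap t ht]
      ext
      rw [h1, Circle.coe_one]
    · right
      symm
      refine MonoidHom.eq_of_eqOn_dense Equiv.Perm.closure_isSwap ?_
      intro t ht
      have hσt : σ t = negOneCircle := by
        obtain ⟨x, y, hxy, rfl⟩ := ht
        have : Equiv.Perm.sign (Equiv.swap x y) = -1 := Equiv.Perm.sign_swap hxy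
        simp [hσ, signChar, this]
      rw [hσt, hswap t ht]
      ext
      rw [h1, negOneCircle_coe]
end

section
/- Let m ∈ ℝ and v > 0, and let g(x) = (2πv)^{−1/2} exp(−(x−m)²/(2v)) be the Gaussian density of mean m and variance v with respect to Lebesgue measure on ℝ. Let ρ : ℝ → [0,∞) be any measurable probability density with respect to Lebesgue measure (∫ ρ(x) dx = 1) such that x ↦ x ρ(x) and x ↦ (x−m)² ρ(x) are integrable with ∫ x ρ(x) dx = m and ∫ (x−m)² ρ(x) dx = v, and such that x ↦ ρ(x) log ρ(x) is integrable. Then the entropy of ρ satisfies s(ρ) = ∫ −ρ(x) log ρ(x) dx ≤ (1/2)(1 + log(2πv)), with equality if and only if ρ = g Lebesgue-almost everywhere; the right-hand side is the entropy of the Gaussian density g. In other words, the normal distribution is the generalized Gibbs law, and hence the strict entropy maximizer, among probability densities on ℝ with prescribed mean and variance. -/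
/-! Gibbs' inequality: for `g > 0` and `ρ ≥ 0` of equal mass, the integrand
`ρ log ρ - ρ log g - ρ + g = g · klFun (ρ / g)` is nonnegative and vanishes exactly where `ρ = g`,
so `∫ ρ log g ≤ ∫ ρ log ρ`, with equality iff `ρ = g` a.e. For the Gaussian density, `log g` is a
quadratic polynomial in `x`, so the cross entropy `-∫ ρ log g` only depends on the mass and the
variance of `ρ`; it equals `(1 + log (2πv)) / 2` for `ρ` and for `g` alike. -/

open MeasureTheory Real InformationTheory ProbabilityTheory
open scoped NNReal

section Gibbs

variable {α : Type*} [MeasurableSpace α] {μ : Measure α} {ρ g : α → ℝ}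

lemma mul_klFun_div {r s : ℝ} (hr : 0 ≤ r) (hs : 0 < s) :
    s * klFun (r / s) = r * log r - r * log s - r + s := by
  rcases hr.eq_or_lt with rfl | hr
  · simp [klFun]
  · rw [klFun, log_div hr.ne' hs.ne']
    field_simp
    ring

lemma mul_klFun_div_nonneg {r s : ℝ} (hr : 0 ≤ r) (hs : 0 < s) : 0 ≤ s * klFun (r / s) :=
  mul_nonneg hs.le (klFun_nonneg (div_nonneg hr hs.le))

variable (hρ : ∀ x, 0 ≤ ρ x) (hg : ∀ x, 0 < g x) (hρi : Integrable ρ μ) (hgi : Integrable g μ)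
  (hρρ : Integrable (fun x ↦ ρ x * log (ρ x)) μ) (hρg : Integrable (fun x ↦ ρ x * log (g x)) μ)
include hρ hg hρi hgi hρρ hρg

lemma integrable_mul_klFun_div : Integrable (fun x ↦ g x * klFun (ρ x / g x)) μ := by
  simp_rw [mul_klFun_div (hρ _) (hg _)]
  exact ((hρρ.sub hρg).sub hρi).add hgi

variable (hmass : ∫ x, ρ x ∂μ = ∫ x, g x ∂μ)
include hmass

lemma integral_mul_klFun_div :
    ∫ x, g x * klFun (ρ x / g x) ∂μ = ∫ x, ρ x * log (ρ x) ∂μ - ∫ x, ρ x * log (g x) ∂μ := by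
  simp_rw [mul_klFun_div (hρ _) (hg _)]
  have h₁ : Integrable (fun x ↦ ρ x * log (ρ x) - ρ x * log (g x)) μ := hρρ.sub hρg
  have h₂ : Integrable (fun x ↦ ρ x * log (ρ x) - ρ x * log (g x) - ρ x) μ := h₁.sub hρi
  rw [integral_add h₂ hgi, integral_sub h₁ hρi, integral_sub hρρ hρg, hmass]
  ring

theorem integral_mul_log_le_integral_mul_log :
    ∫ x, ρ x * log (g x) ∂μ ≤ ∫ x, ρ x * log (ρ x) ∂μ := by
  have := integral_nonneg (μ := μ) (f := fun x ↦ g x * klFun (ρ x / g x))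
    fun x ↦ mul_klFun_div_nonneg (hρ x) (hg x)
  linarith [integral_mul_klFun_div hρ hg hρi hgi hρρ hρg hmass]

theorem integral_mul_log_eq_iff :
    ∫ x, ρ x * log (ρ x) ∂μ = ∫ x, ρ x * log (g x) ∂μ ↔ ρ =ᵐ[μ] g := by
  rw [← sub_eq_zero, ← integral_mul_klFun_div hρ hg hρi hgi hρρ hρg hmass,
    integral_eq_zero_iff_of_nonneg (fun x ↦ mul_klFun_div_nonneg (hρ x) (hg x))
      (integrable_mul_klFun_div hρ hg hρi hgi hρρ hρg)]
  refine Filter.eventually_congr (Filter.Eventually.of_forall fun x ↦ ?_)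
  rw [Pi.zero_apply, mul_eq_zero, klFun_eq_zero_iff (div_nonneg (hρ x) (hg x).le),
    div_eq_one_iff_eq (hg x).ne', or_iff_right (hg x).ne']

end Gibbs

section Gaussian

variable {μ : ℝ} {v : ℝ≥0}

lemma log_gaussianPDFReal (hv : v ≠ 0) (x : ℝ) :
    log (gaussianPDFReal μ v x) = -(1 / 2) * log (2 * π * v) - (x - μ) ^ 2 / (2 * v) := by
  have : 0 < 2 * π * v := by positivity
  rw [gaussianPDFReal, log_mul (by positivity) (exp_pos _).ne', log_inv, log_sqrt this.le, log_exp]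
  ring

lemma integral_sq_mul_gaussianPDFReal (hv : v ≠ 0) :
    ∫ x, (x - μ) ^ 2 * gaussianPDFReal μ v x = v := by
  simp_rw [mul_comm _ (gaussianPDFReal μ v _), ← smul_eq_mul,
    ← integral_gaussianReal_eq_integral_smul hv]
  rw [← variance_fun_id_gaussianReal (μ := μ) (v := v), variance_eq_integral (by fun_prop),
    integral_id_gaussianReal]

lemma integrable_sq_mul_gaussianPDFReal (hv : v ≠ 0) :
    Integrable fun x ↦ (x - μ) ^ 2 * gaussianPDFReal μ v x :=
  .of_integral_ne_zero <| by rw [integral_sq_mul_gaussianPDFReal hv]; exact_mod_cast hv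

lemma gaussianPDFReal_eq_rpow (x : ℝ) : gaussianPDFReal μ v x =
    (2 * π * v) ^ (-(1 / 2 : ℝ)) * exp (-((x - μ) ^ 2) / (2 * v)) := by
  rw [gaussianPDFReal, sqrt_eq_rpow, rpow_neg (by positivity)]

lemma mul_log_gaussianPDFReal (hv : v ≠ 0) (r x : ℝ) : r * log (gaussianPDFReal μ v x) =
    -(1 / 2) * log (2 * π * v) * r - (2 * (v : ℝ))⁻¹ * ((x - μ) ^ 2 * r) := by
  rw [log_gaussianPDFReal hv]
  ring

variable {ρ : ℝ → ℝ} (hv : v ≠ 0) (hρi : Integrable ρ) (hvi : Integrable fun x ↦ (x - μ) ^ 2 * ρ x)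
include hv hρi hvi

lemma integrable_mul_log_gaussianPDFReal :
    Integrable fun x ↦ ρ x * log (gaussianPDFReal μ v x) := by
  simp_rw [mul_log_gaussianPDFReal hv]
  exact (hρi.const_mul _).sub (hvi.const_mul _)

lemma integral_mul_log_gaussianPDFReal (hρone : ∫ x, ρ x = 1)
    (hvar : ∫ x, (x - μ) ^ 2 * ρ x = v) :
    ∫ x, ρ x * log (gaussianPDFReal μ v x) = -((1 / 2) * (1 + log (2 * π * v))) := by
  simp_rw [mul_log_gaussianPDFReal hv]
  rw [integral_sub (hρi.const_mul _) (hvi.const_mul _), integral_const_mul, integral_const_mul,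
    hρone, hvar]
  field_simp
  ring

end Gaussian

theorem gaussian_max_entropy_general
    (m : ℝ) (v : ℝ) (hv : 0 < v)
    (g : ℝ → ℝ)
    (hg : ∀ x, g x = (2 * π * v) ^ (-(1/2 : ℝ)) * Real.exp (-((x - m) ^ 2) / (2 * v)))
    (ρ : ℝ → ℝ) (hρnonneg : ∀ x, 0 ≤ ρ x)
    (hρint : Integrable ρ volume) (hρone : ∫ x, ρ x = 1)
    (hvint : Integrable (fun x => (x - m) ^ 2 * ρ x) volume)
    (hvar : ∫ x, (x - m) ^ 2 * ρ x = v)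
    (hent : Integrable (fun x => ρ x * Real.log (ρ x)) volume) :
    (∫ x, -(ρ x * Real.log (ρ x))) ≤ (1 / 2) * (1 + Real.log (2 * π * v)) ∧
    ((∫ x, -(ρ x * Real.log (ρ x))) = (1 / 2) * (1 + Real.log (2 * π * v)) ↔
      ρ =ᵐ[volume] g) ∧
    (∫ x, -(g x * Real.log (g x))) = (1 / 2) * (1 + Real.log (2 * π * v)) := by
  lift v to ℝ≥0 using hv.le
  have hv₀ : v ≠ 0 := by exact_mod_cast hv.ne'
  obtain rfl : g = gaussianPDFReal m v := funext fun x ↦ by rw [hg, gaussianPDFReal_eq_rpow]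
  have hgpos := fun x ↦ gaussianPDFReal_pos m v x hv₀
  have hgi := integrable_gaussianPDFReal m v
  have hmass : ∫ x, ρ x = ∫ x, gaussianPDFReal m v x := by
    rw [hρone, integral_gaussianPDFReal_eq_one m hv₀]
  have hcross := integral_mul_log_gaussianPDFReal hv₀ hρint hvint hρone hvar
  have hcross_self := integral_mul_log_gaussianPDFReal hv₀ hgi
    (integrable_sq_mul_gaussianPDFReal hv₀) (integral_gaussianPDFReal_eq_one m hv₀)
    (integral_sq_mul_gaussianPDFReal hv₀)
  have hρg := integrable_mul_log_gaussianPDFReal hv₀ hρint hvint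
  simp only [integral_neg]
  refine ⟨?_, ?_, by rw [hcross_self, neg_neg]⟩
  · linarith [integral_mul_log_le_integral_mul_log hρnonneg hgpos hρint hgi hent hρg hmass]
  · rw [← integral_mul_log_eq_iff hρnonneg hgpos hρint hgi hent hρg hmass, hcross,
      neg_eq_iff_eq_neg]

/-- The Gaussian density `g(x) = (2πv)^{-1/2} exp(-(x-m)²/(2v))` is the strict entropy
maximizer among probability densities on `ℝ` (for Lebesgue measure) with mean `m` and
variance `v`: any such density `ρ` has entropy at most `(1/2)(1 + log(2πv))`, with
equality iff `ρ = g` almost everywhere, and this bound is the entropy of `g`. -/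
theorem gaussian_max_entropy
    (m : ℝ) (v : ℝ) (hv : 0 < v)
    (g : ℝ → ℝ)
    (hg : ∀ x, g x = (2 * π * v) ^ (-(1/2 : ℝ)) * Real.exp (-((x - m) ^ 2) / (2 * v)))
    (ρ : ℝ → ℝ) (hρmeas : Measurable ρ) (hρnonneg : ∀ x, 0 ≤ ρ x)
    (hρint : Integrable ρ volume) (hρone : ∫ x, ρ x = 1)
    (hmint : Integrable (fun x => x * ρ x) volume)
    (hmean : ∫ x, x * ρ x = m)
    (hvint : Integrable (fun x => (x - m) ^ 2 * ρ x) volume)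
    (hvar : ∫ x, (x - m) ^ 2 * ρ x = v)
    (hent : Integrable (fun x => ρ x * Real.log (ρ x)) volume) :
    (∫ x, -(ρ x * Real.log (ρ x))) ≤ (1 / 2) * (1 + Real.log (2 * π * v)) ∧
    ((∫ x, -(ρ x * Real.log (ρ x))) = (1 / 2) * (1 + Real.log (2 * π * v)) ↔
      ρ =ᵐ[volume] g) ∧
    (∫ x, -(g x * Real.log (g x))) = (1 / 2) * (1 + Real.log (2 * π * v)) :=
  gaussian_max_entropy_general m v hv g hg ρ hρnonneg hρint hρone hvint hvar hent
end
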